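/- Let G be a finite simple graph that is C_3-free, C_5-free and C_6-free, let R be a minimal redundant set of G, and let x ∈ red(R) be such that |red(R) ∩ N²(x)| = 1, where N²(x) is the set of vertices at distance exactly 2 from x. Then |R ∩ N(x)| = 1 and |R| = 3. -/
import Mathlib


open Set SimpleGraph

variable {V : Type*}

/-- The closed neighborhood `N[v]` of a vertex. -/
def closedNbr (G : SimpleGraph V) (v : V) : Set V := insert v (G.neighborSet v)

/-- Private neighbors of `x` with respect to `I`. -/
def privSet (G : SimpleGraph V) (x : V) (I : Set V) : Set V :=
  {y ∈ closedNbr G x | closedNbr G y ∩ I = {x}}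

/-- A set is irredundant if every element has a private neighbor. -/
def Irred (G : SimpleGraph V) (I : Set V) : Prop := ∀ x ∈ I, (privSet G x I).Nonempty

/-- A maximal irredundant set. -/
def MaxIrred (G : SimpleGraph V) (I : Set V) : Prop :=
  Irred G I ∧ ∀ J : Set V, Irred G J → I ⊆ J → J = I

def Redundant (G : SimpleGraph V) (R : Set V) : Prop := ¬ Irred G R

def MinRedundant (G : SimpleGraph V) (R : Set V) : Prop :=
  Redundant G R ∧ ∀ S : Set V, S ⊂ R → ¬ Redundant G S

/-- The set of redundant vertices of a set. -/
def redVerts (G : SimpleGraph V) (R : Set V) : Set V := {x ∈ R | privSet G x R = ∅}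

def Dominating (G : SimpleGraph V) (D : Set V) : Prop := ∀ v : V, ∃ d ∈ D, v ∈ closedNbr G d

def MinDominating (G : SimpleGraph V) (D : Set V) : Prop :=
  Dominating G D ∧ ∀ S : Set V, S ⊂ D → ¬ Dominating G S

/-- Vertices at distance at most 2 from `x`. -/
def ball2 (G : SimpleGraph V) (x : V) : Set V :=
  {y | y = x ∨ G.Adj x y ∨ ∃ w, G.Adj x w ∧ G.Adj w y}

/-- Vertices at distance exactly 2 from `x`. -/
def sphere2 (G : SimpleGraph V) (x : V) : Set V :=
  {y | y ≠ x ∧ ¬ G.Adj x y ∧ ∃ w, G.Adj x w ∧ G.Adj w y}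

/-- `G` contains no induced cycle of length `k`. -/
def CFree (G : SimpleGraph V) (k : ℕ) : Prop :=
  IsEmpty (SimpleGraph.cycleGraph k ↪g G)

/-- `S` dominates `B` through open neighborhoods. -/
def DomOver (G : SimpleGraph V) (S B : Set V) : Prop := ∀ b ∈ B, ∃ s ∈ S, G.Adj s b

def MinDomOver (G : SimpleGraph V) (S B : Set V) : Prop :=
  DomOver G S B ∧ ∀ S' : Set V, S' ⊂ S → ¬ DomOver G S' B

/-- `N(Y)`, the union of open neighborhoods of elements of `Y`. -/
def nbrUnion (G : SimpleGraph V) (Y : Set V) : Set V := ⋃ y ∈ Y, G.neighborSet y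

/-- Private edges of `x` with respect to `I` in a hypergraph. -/
def hypPriv (H : Set (Set V)) (x : V) (I : Set V) : Set (Set V) := {E ∈ H | E ∩ I = {x}}

def HypIrred (H : Set (Set V)) (I : Set V) : Prop := ∀ x ∈ I, (hypPriv H x I).Nonempty

def HypMaxIrred (H : Set (Set V)) (I : Set V) : Prop :=
  HypIrred H I ∧ ∀ J : Set V, HypIrred H J → I ⊆ J → J = I

/-- The trace of a hypergraph on a set `S`. -/
def htrace (H : Set (Set V)) (S : Set V) : Set (Set V) :=
  {F | ∃ E ∈ H, F = E ∩ S ∧ (E ∩ S).Nonempty}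

/-- The closed-neighborhood hypergraph of a graph. -/
def nbrHyp (G : SimpleGraph V) : Set (Set V) := Set.range (closedNbr G)

/-- The first `i` vertices in the ordering `v` (zero-based: `v 0, …, v (i-1)`). -/
def firstVerts (v : ℕ → V) (i : ℕ) : Set V := {x | ∃ j < i, v j = x}

/-- The incidence co-bipartite graph of the closed-neighborhood hypergraph of `G`:
`Sum.inl` is the vertex side `V`, `Sum.inr` is the copy `U`. -/
def cobip (G : SimpleGraph V) : SimpleGraph (V ⊕ V) :=
  SimpleGraph.fromRel (fun a b => match a, b with
    | Sum.inl _, Sum.inl _ => True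
    | Sum.inr _, Sum.inr _ => True
    | Sum.inl a, Sum.inr b => a = b ∨ G.Adj a b
    | Sum.inr _, Sum.inl _ => False)


section Helpers

variable {G : SimpleGraph V} {R : Set V}

lemma mem_closedNbr' {v y : V} : y ∈ closedNbr G v ↔ y = v ∨ G.Adj v y := by
  simp [closedNbr]

lemma noCyc {n : ℕ} (hn : CFree G n) (f : Fin n → V) (hinj : Function.Injective f)
    (hadj : ∀ i j, G.Adj (f i) (f j) ↔ (cycleGraph n).Adj i j) : False :=
  hn.false ⟨⟨f, hinj⟩, fun {i j} => hadj i j⟩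

lemma noTriangle (h3 : CFree G 3) {a b c : V} (hab : G.Adj a b) (hbc : G.Adj b c)
    (hca : G.Adj c a) : False := by
  have h1 : a ≠ c := fun h => G.irrefl (h ▸ hca)
  have h2 : a ≠ b := G.ne_of_adj hab
  have h3' : b ≠ c := G.ne_of_adj hbc
  apply noCyc h3 ![a,b,c]
  · intro i j hij
    fin_cases i <;> fin_cases j <;> simp_all
  · intro i j
    fin_cases i <;> fin_cases j <;>
      simp [cycleGraph_adj, hab, hbc, hca, hab.symm, hbc.symm, hca.symm, G.irrefl] <;>
      decide

/-- no 5-cycle `a-b-c-d-e-a` given non-adjacency of distance-2 pairs. -/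
lemma noC5 (h5 : CFree G 5) {a b c d e : V}
    (hab : G.Adj a b) (hbc : G.Adj b c) (hcd : G.Adj c d) (hde : G.Adj d e)
    (hea : G.Adj e a)
    (hac : ¬ G.Adj a c) (hbd : ¬ G.Adj b d) (hce : ¬ G.Adj c e)
    (hda : ¬ G.Adj d a) (heb : ¬ G.Adj e b) : False := by
  have hba := hab.symm; have hcb := hbc.symm; have hdc := hcd.symm
  have hed := hde.symm; have hae := hea.symm
  have hca : ¬ G.Adj c a := fun h => hac h.symm
  have hdb : ¬ G.Adj d b := fun h => hbd h.symm
  have hec : ¬ G.Adj e c := fun h => hce h.symm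
  have had : ¬ G.Adj a d := fun h => hda h.symm
  have hbe : ¬ G.Adj b e := fun h => heb h.symm
  apply noCyc h5 ![a,b,c,d,e]
  · intro i j hij
    fin_cases i <;> fin_cases j <;> simp_all
  · intro i j
    fin_cases i <;> fin_cases j <;>
      simp [cycleGraph_adj, G.irrefl, *] <;> decide

private def six (a b c d e f : V) : Fin 6 → V
  | ⟨0, _⟩ => a
  | ⟨1, _⟩ => b
  | ⟨2, _⟩ => c
  | ⟨3, _⟩ => d
  | ⟨4, _⟩ => e
  | ⟨5, _⟩ => f

/-- no 6-cycle `a-b-c-d-e-f-a` given non-adjacency of all other pairs. -/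
lemma noC6 (h6 : CFree G 6) {a b c d e f : V}
    (hab : G.Adj a b) (hbc : G.Adj b c) (hcd : G.Adj c d) (hde : G.Adj d e)
    (hef : G.Adj e f) (hfa : G.Adj f a)
    (hac : ¬ G.Adj a c) (hbd : ¬ G.Adj b d) (hce : ¬ G.Adj c e)
    (hdf : ¬ G.Adj d f) (hea : ¬ G.Adj e a) (hfb : ¬ G.Adj f b)
    (had : ¬ G.Adj a d) (hbe : ¬ G.Adj b e) (hcf : ¬ G.Adj c f) : False := by
  have hba := hab.symm; have hcb := hbc.symm; have hdc := hcd.symm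
  have hed := hde.symm; have hfe := hef.symm; have haf := hfa.symm
  have hca : ¬ G.Adj c a := fun h => hac h.symm
  have hdb : ¬ G.Adj d b := fun h => hbd h.symm
  have hec : ¬ G.Adj e c := fun h => hce h.symm
  have hfd : ¬ G.Adj f d := fun h => hdf h.symm
  have hae : ¬ G.Adj a e := fun h => hea h.symm
  have hbf : ¬ G.Adj b f := fun h => hfb h.symm
  have hda : ¬ G.Adj d a := fun h => had h.symm
  have heb : ¬ G.Adj e b := fun h => hbe h.symm
  have hfc : ¬ G.Adj f c := fun h => hcf h.symm
  apply noCyc h6 (six a b c d e f)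
  · intro i j hij
    fin_cases i <;> fin_cases j <;> simp_all [six]
  · intro i j
    fin_cases i <;> fin_cases j <;>
      simp [six, cycleGraph_adj, G.irrefl, *] <;> decide

/-- The key consequence of minimality: for a redundant vertex `w` and any other
vertex `z` of `R`, some `y ∈ N[w]` has `N[y] ∩ R = {w, z}`. -/
lemma keyStar (hR : MinRedundant G R) {w z : V}
    (hw : w ∈ redVerts G R) (hz : z ∈ R) (hne : z ≠ w) :
    ∃ y, y ∈ closedNbr G w ∧ closedNbr G y ∩ R = {w, z} := by
  have hwR : w ∈ R := hw.1
  have hpriv : privSet G w R = ∅ := hw.2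
  have hirr : Irred G (R \ {z}) := not_not.mp (hR.2 _ (Set.sdiff_singleton_ssubset.mpr hz))
  obtain ⟨y, hy1, hy2⟩ := hirr w ⟨hwR, fun h => hne (Set.mem_singleton_iff.mp h).symm⟩
  have hyne : closedNbr G y ∩ R ≠ {w} := by
    intro h
    have : y ∈ privSet G w R := ⟨hy1, h⟩
    simp [hpriv] at this
  have hzy : z ∈ closedNbr G y := by
    by_contra hzy
    apply hyne
    rw [← hy2]
    ext t
    simp only [Set.mem_inter_iff, Set.mem_diff, Set.mem_singleton_iff]
    constructor
    · rintro ⟨h1, h2⟩; exact ⟨h1, h2, fun h => hzy (h ▸ h1)⟩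
    · rintro ⟨h1, h2, _⟩; exact ⟨h1, h2⟩
  have hwmem : w ∈ closedNbr G y ∩ (R \ {z}) := by rw [hy2]; rfl
  refine ⟨y, hy1, ?_⟩
  ext t
  simp only [Set.mem_inter_iff, Set.mem_insert_iff, Set.mem_singleton_iff]
  constructor
  · rintro ⟨h1, h2⟩
    by_cases ht : t = z
    · right; exact ht
    · left
      have : t ∈ closedNbr G y ∩ (R \ {z}) := ⟨h1, h2, ht⟩
      rw [hy2] at this; exact this
  · rintro (rfl | rfl)
    · exact ⟨hwmem.1, hwmem.2.1⟩
    · exact ⟨hzy, hz⟩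

end Helpers

/-- in a `(C₃, C₅, C₆)`-free graph, if `R` is a minimal redundant set,
`x ∈ red(R)`, and `|red(R) ∩ N²(x)| = 1`, then `|R ∩ N(x)| = 1` and `|R| = 3`. -/
theorem stmt11 [Fintype V] (G : SimpleGraph V) (h3 : CFree G 3) (h5 : CFree G 5)
    (h6 : CFree G 6) (R : Set V) (hR : MinRedundant G R) (x : V) (hx : x ∈ redVerts G R)
    (hone : (redVerts G R ∩ sphere2 G x).ncard = 1) :
    (R ∩ G.neighborSet x).ncard = 1 ∧ R.ncard = 3 := by
  classical
  obtain ⟨u, hu⟩ := Set.ncard_eq_one.mp hone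
  have hu_mem : u ∈ redVerts G R ∩ sphere2 G x := by rw [hu]; rfl
  have hu_red : u ∈ redVerts G R := hu_mem.1
  have huR : u ∈ R := hu_red.1
  obtain ⟨hu_ne, hu_nadj, -⟩ := hu_mem.2
  have hxR : x ∈ R := hx.1
  have hxpriv : privSet G x R = ∅ := hx.2
  -- generic non-adjacency from an intersection identity
  have nadj : ∀ (v t : V) (S : Set V), closedNbr G v ∩ R = S → t ∈ R → t ∉ S →
      ¬ G.Adj v t :=
    fun v t S hS htR htS hadj => htS (hS ▸ ⟨mem_closedNbr'.mpr (Or.inr hadj), htR⟩)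
  -- every vertex of R is x, a neighbour of x, or at distance two from x
  have struct : ∀ z ∈ R, z ≠ x → G.Adj x z ∨ z ∈ sphere2 G x := by
    intro z hz hne
    obtain ⟨y, hy1, hy2⟩ := keyStar hR hx hz hne
    have hzy : z ∈ closedNbr G y := by
      have : z ∈ closedNbr G y ∩ R := by rw [hy2]; exact Or.inr rfl
      exact this.1
    rcases mem_closedNbr'.mp hy1 with rfl | hxy
    · rcases mem_closedNbr'.mp hzy with h | h
      · exact absurd h hne
      · exact Or.inl h
    · rcases mem_closedNbr'.mp hzy with rfl | hyz
      · exact Or.inl hxy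
      · by_cases hxz : G.Adj x z
        · exact absurd hxz.symm (fun h => noTriangle h3 hxy hyz h)
        · exact Or.inr ⟨hne, hxz, y, hxy, hyz⟩
  -- existence of a neighbour of x in R
  have hx_cl : closedNbr G x ∩ R ≠ {x} := by
    intro h
    have : x ∈ privSet G x R := ⟨mem_closedNbr'.mpr (Or.inl rfl), h⟩
    simp [hxpriv] at this
  have hxmem : x ∈ closedNbr G x ∩ R := ⟨mem_closedNbr'.mpr (Or.inl rfl), hxR⟩
  have hss : ({x} : Set V) ⊂ closedNbr G x ∩ R :=
    (Set.singleton_subset_iff.mpr hxmem).ssubset_of_ne (Ne.symm hx_cl)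
  obtain ⟨a, ham, hax⟩ := Set.exists_of_ssubset hss
  have hax' : a ≠ x := fun h => hax (by simp [h])
  have haadj : G.Adj x a := (mem_closedNbr'.mp ham.1).resolve_left hax'
  have haR : a ∈ R := ham.2
  -- the private-neighbourhood identity for neighbours of x when there are two
  have key : ∀ b1 b2 : V, b1 ∈ R → G.Adj x b1 → b2 ∈ R → G.Adj x b2 → b1 ≠ b2 →
      closedNbr G b1 ∩ R = {x, b1} := by
    intro b1 b2 hb1R hb1 hb2R hb2 hb12
    obtain ⟨y, hy1, hy2⟩ := keyStar hR hx hb1R (fun h => G.irrefl (h ▸ hb1))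
    have hyx : y ≠ x := by
      intro h
      rw [h] at hy2
      have hb2m : b2 ∈ ({x, b1} : Set V) := by
        rw [← hy2]; exact ⟨mem_closedNbr'.mpr (Or.inr hb2), hb2R⟩
      rcases hb2m with h2 | h2
      · exact G.irrefl (h2 ▸ hb2)
      · exact hb12 h2.symm
    have hxy : G.Adj x y := (mem_closedNbr'.mp hy1).resolve_left hyx
    have hb1y : b1 ∈ closedNbr G y := by
      have : b1 ∈ closedNbr G y ∩ R := by rw [hy2]; exact Or.inr rfl
      exact this.1
    rcases mem_closedNbr'.mp hb1y with h | h
    · rw [h]; rw [h] at hy2; exact hy2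
    · exact absurd hb1.symm (fun hh => noTriangle h3 hxy h hh)
  -- uniqueness of the neighbour of x in R
  have uniqA : ∀ a1, a1 ∈ R → G.Adj x a1 → ∀ a2, a2 ∈ R → G.Adj x a2 → a1 = a2 := by
    intro a1 h1R h1adj a2 h2R h2adj
    by_contra hne12
    have hNa1 := key a1 a2 h1R h1adj h2R h2adj hne12
    have hNa2 := key a2 a1 h2R h2adj h1R h1adj (Ne.symm hne12)
    have hxa1 : x ≠ a1 := G.ne_of_adj h1adj
    have hxa2 : x ≠ a2 := G.ne_of_adj h2adj
    have ha1u : a1 ≠ u := fun h => hu_nadj (h ▸ h1adj)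
    have ha2u : a2 ≠ u := fun h => hu_nadj (h ▸ h2adj)
    obtain ⟨p, hp1, hp2⟩ := keyStar hR hu_red h1R ha1u
    obtain ⟨q, hq1, hq2⟩ := keyStar hR hu_red h2R ha2u
    have hpa1 : p ≠ a1 := by
      intro h
      rw [h] at hp2
      have hxm : x ∈ ({u, a1} : Set V) := by rw [← hp2, hNa1]; exact Or.inl rfl
      rcases hxm with h' | h'
      · exact hu_ne h'.symm
      · exact hxa1 h' 
    have hqa2 : q ≠ a2 := by
      intro h
      rw [h] at hq2
      have hxm : x ∈ ({u, a2} : Set V) := by rw [← hq2, hNa2]; exact Or.inl rfl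
      rcases hxm with h' | h'
      · exact hu_ne h'.symm
      · exact hxa2 h' 
    have hpA : G.Adj p a1 := by
      have : a1 ∈ closedNbr G p := by
        have : a1 ∈ closedNbr G p ∩ R := by rw [hp2]; exact Or.inr rfl
        exact this.1
      exact (mem_closedNbr'.mp this).resolve_left (fun h => hpa1 h.symm)
    have hqA : G.Adj q a2 := by
      have : a2 ∈ closedNbr G q := by
        have : a2 ∈ closedNbr G q ∩ R := by rw [hq2]; exact Or.inr rfl
        exact this.1
      exact (mem_closedNbr'.mp this).resolve_left (fun h => hqa2 h.symm)
    have na1_q : ¬ G.Adj q a1 := nadj q a1 _ hq2 h1R (by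
      rintro (h | h); exacts [ha1u h, hne12 h])
    have na2_p : ¬ G.Adj p a2 := nadj p a2 _ hp2 h2R (by
      rintro (h | h); exacts [ha2u h, hne12 h.symm])
    have nx_p : ¬ G.Adj p x := nadj p x _ hp2 hxR (by
      rintro (h | h); exacts [hu_ne h.symm, hxa1 h])
    have nx_q : ¬ G.Adj q x := nadj q x _ hq2 hxR (by
      rintro (h | h); exacts [hu_ne h.symm, hxa2 h])
    have na1_a2 : ¬ G.Adj a2 a1 := nadj a2 a1 _ hNa2 h1R (by
      rintro (h | h); exacts [hxa1 h.symm, hne12 h])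
    rcases mem_closedNbr'.mp hp1 with hpu | hup
    · rw [hpu] at hp2 hpA na2_p nx_p
      rcases mem_closedNbr'.mp hq1 with hqu | huq
      · rw [hqu] at hq2
        -- both p = u and q = u : {u,a1} = {u,a2}
        have ha1m : a1 ∈ ({u, a2} : Set V) := by rw [← hq2, hp2]; exact Or.inr rfl
        rcases ha1m with h | h
        · exact ha1u h
        · exact hne12 h
      · -- p = u, q ≠ u : 5-cycle x a1 u q a2
        exact noC5 h5 h1adj hpA.symm huq hqA h2adj.symm
          hu_nadj (fun h => na1_q h.symm) na2_p nx_q na1_a2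
    · rcases mem_closedNbr'.mp hq1 with hqu | huq
      · rw [hqu] at hq2 hqA na1_q nx_q
        -- q = u, p ≠ u : 5-cycle x a2 u p a1
        exact noC5 h5 h2adj hqA.symm hup hpA h1adj.symm
          hu_nadj (fun h => na2_p h.symm) na1_q nx_p
          (fun h => na1_a2 h.symm)
      · -- 6-cycle x a1 p u q a2
        exact noC6 h6 h1adj hpA.symm hup.symm huq hqA h2adj.symm
          (fun h => nx_p h.symm)
          (fun h => noTriangle h3 hup hpA h)
          (fun h => noTriangle h3 h huq.symm hup)
          (fun h => noTriangle h3 huq hqA h.symm)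
          nx_q
          na1_a2
          hu_nadj
          (fun h => na1_q h.symm)
          na2_p
  -- uniqueness of the sphere-2 vertex of R
  have uniqB : ∀ b, b ∈ R → b ∈ sphere2 G x → b = u := by
    intro b hbR hbs
    by_contra hbu
    obtain ⟨hbx, hbnadj, -⟩ := hbs
    obtain ⟨yu, hyu1, hyu2⟩ := keyStar hR hx huR hu_ne
    have hyux : yu ≠ x := by
      intro h
      rw [h] at hyu2
      have hum : u ∈ closedNbr G x ∩ R := by rw [hyu2]; exact Or.inr rfl
      rcases mem_closedNbr'.mp hum.1 with h' | h'
      · exact hu_ne h'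
      · exact hu_nadj h' 
    have hxyu : G.Adj x yu := (mem_closedNbr'.mp hyu1).resolve_left hyux
    have hyuu : G.Adj yu u := by
      have : u ∈ closedNbr G yu := by
        have : u ∈ closedNbr G yu ∩ R := by rw [hyu2]; exact Or.inr rfl
        exact this.1
      exact (mem_closedNbr'.mp this).resolve_left (fun h => hu_nadj (h ▸ hxyu))
    obtain ⟨yb, hyb1, hyb2⟩ := keyStar hR hx hbR hbx
    have hybx : yb ≠ x := by
      intro h
      rw [h] at hyb2
      have hbm : b ∈ closedNbr G x ∩ R := by rw [hyb2]; exact Or.inr rfl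
      rcases mem_closedNbr'.mp hbm.1 with h' | h'
      · exact hbx h'
      · exact hbnadj h' 
    have hxyb : G.Adj x yb := (mem_closedNbr'.mp hyb1).resolve_left hybx
    have hybb : G.Adj yb b := by
      have : b ∈ closedNbr G yb := by
        have : b ∈ closedNbr G yb ∩ R := by rw [hyb2]; exact Or.inr rfl
        exact this.1
      exact (mem_closedNbr'.mp this).resolve_left (fun h => hbnadj (h ▸ hxyb))
    have nb_yu : ¬ G.Adj yu b := nadj yu b _ hyu2 hbR (by
      rintro (h | h); exacts [hbx h, hbu h])
    have nu_yb : ¬ G.Adj yb u := nadj yb u _ hyb2 huR (by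
      rintro (h | h); exacts [hu_ne h, hbu h.symm])
    have nyb_yu : ¬ G.Adj yb yu := fun h => noTriangle h3 hxyb h hxyu.symm
    obtain ⟨c, hc1, hc2⟩ := keyStar hR hu_red hbR hbu
    by_cases hub : G.Adj u b
    · -- 5-cycle x yu u b yb
      exact noC5 h5 hxyu hyuu hub hybb.symm hxyb.symm
        hu_nadj nb_yu (fun h => nu_yb h.symm) (fun h => hbnadj h.symm) nyb_yu
    · have hcu : c ≠ u := by
        rintro rfl
        have : b ∈ closedNbr G c := by
          have : b ∈ closedNbr G c ∩ R := by rw [hc2]; exact Or.inr rfl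
          exact this.1
        rcases mem_closedNbr'.mp this with h | h
        · exact hbu h
        · exact hub h
      have hcb : c ≠ b := by
        intro h
        rw [h] at hc1
        rcases mem_closedNbr'.mp hc1 with h' | h'
        · exact hbu h'
        · exact hub h'
      have huc : G.Adj u c := (mem_closedNbr'.mp hc1).resolve_left hcu
      have hcbadj : G.Adj c b := by
        have : b ∈ closedNbr G c := by
          have : b ∈ closedNbr G c ∩ R := by rw [hc2]; exact Or.inr rfl
          exact this.1
        exact (mem_closedNbr'.mp this).resolve_left (fun h => hcb h.symm)
      have nx_c : ¬ G.Adj c x := nadj c x _ hc2 hxR (by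
        rintro (h | h); exacts [hu_ne h.symm, hbx h.symm])
      -- 6-cycle x yu u c b yb
      exact noC6 h6 hxyu hyuu huc hcbadj hybb.symm hxyb.symm
        hu_nadj
        (fun h => noTriangle h3 h huc.symm hyuu.symm)
        hub
        (fun h => noTriangle h3 hcbadj hybb.symm h.symm)
        (fun h => hbnadj h.symm)
        nyb_yu
        (fun h => nx_c h.symm)
        nb_yu
        (fun h => nu_yb h.symm)
  -- conclusion
  have hAset : R ∩ G.neighborSet x = {a} := by
    ext t
    constructor
    · rintro ⟨htR, htadj⟩
      exact uniqA t htR htadj a haR haadj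
    · rintro rfl
      exact ⟨haR, haadj⟩
  have hxa : x ≠ a := G.ne_of_adj haadj
  have hau : a ≠ u := fun h => hu_nadj (h ▸ haadj)
  have hRset : R = {x, a, u} := by
    ext t
    constructor
    · intro htR
      by_cases htx : t = x
      · exact Or.inl htx
      · rcases struct t htR htx with hadj | hs
        · exact Or.inr (Or.inl (uniqA t htR hadj a haR haadj))
        · exact Or.inr (Or.inr (uniqB t htR hs))
    · rintro (rfl | rfl | rfl)
      exacts [hxR, haR, huR]
  refine ⟨?_, ?_⟩
  · rw [hAset]; exact Set.ncard_singleton a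
  · rw [hRset]
    exact Set.ncard_eq_three.mpr ⟨x, a, u, hxa, Ne.symm hu_ne, hau, rfl⟩
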